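/- arXiv:1612.04541 — 7 statements merged into one kernel-verified Lean document; each statement's English description precedes it below -/
import Mathlib

section
/- The entries a_{ij} of b⁻¹ satisfy the following 2×2 cofactor identities: a₀₀a₁₁ − a₀₁² = a₁₁; a₀₀a₂₂ − a₀₂² = 1/B; a₀₀a₃₃ − a₀₃² = sin²(π/v)/B; a₁₁a₃₃ − a₁₃² = 1/B; and a₂₂a₃₃ − a₂₃² = a₂₂. -/
/-!
The matrix is tridiagonal, so its adjugate can be written down entry by entry, and each
identity is Jacobi's complementary-minor theorem for a `2 × 2` minor of `b⁻¹`: it equals the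
complementary `2 × 2` minor of `b` divided by `B`. These complementary minors are `1 - cos²(π/w)`,
`1`, `sin²(π/v)`, `1` and `1 - cos²(π/u)`, and the first and last are `B` times `a₁₁` and `a₂₂`.
-/

open Real Matrix

/-- The Coxeter–Schläfli matrix of the complete orthoscheme `W_{uvw}`. -/
noncomputable def CSmatrix (u v w : ℝ) : Matrix (Fin 4) (Fin 4) ℝ :=
  !![1, -cos (π/u), 0, 0;
     -cos (π/u), 1, -cos (π/v), 0;
     0, -cos (π/v), 1, -cos (π/w);
     0, 0, -cos (π/w), 1]

/-- The inverse of the Coxeter–Schläfli matrix; its entries are the `a_{ij}`. -/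
noncomputable def CSinv (u v w : ℝ) : Matrix (Fin 4) (Fin 4) ℝ :=
  (CSmatrix u v w)⁻¹

namespace CoxeterChain

variable (a b c : ℝ)

def chainMatrix : Matrix (Fin 4) (Fin 4) ℝ :=
  !![1, -a, 0, 0;
     -a, 1, -b, 0;
     0, -b, 1, -c;
     0, 0, -c, 1]

def chainCofactor : Matrix (Fin 4) (Fin 4) ℝ :=
  !![1 - b^2 - c^2, a * (1 - c^2), a * b, a * b * c;
     a * (1 - c^2), 1 - c^2, b, b * c;
     a * b, b, 1 - a^2, c * (1 - a^2);
     a * b * c, b * c, c * (1 - a^2), 1 - a^2 - b^2]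

theorem det_chainMatrix :
    (chainMatrix a b c).det = 1 - a^2 - b^2 - c^2 + a^2 * c^2 := by
  rw [det_succ_row_zero, Fin.sum_univ_four]
  simp only [det_fin_three, submatrix_apply, chainMatrix,
    of_apply, cons_val', cons_val_zero, cons_val_one, cons_val, cons_val_fin_one, Fin.succAbove,
    Fin.reduceCastSucc, Fin.reduceLT, Fin.reduceSucc, ↓reduceIte, Fin.isValue, Fin.coe_ofNat_eq_mod]
  ring

theorem chainMatrix_mul_chainCofactor :
    chainMatrix a b c * chainCofactor a b c = (chainMatrix a b c).det • 1 := by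
  rw [det_chainMatrix]
  ext i j
  fin_cases i <;> fin_cases j <;>
    simp only [chainMatrix, chainCofactor, mul_apply, Fin.sum_univ_four, of_apply, cons_val',
      cons_val_zero, cons_val_one, cons_val, cons_val_fin_one, Matrix.smul_apply, one_apply,
      smul_eq_mul, Fin.isValue, Fin.reduceFinMk, Fin.zero_eta, Fin.mk_one, Fin.reduceEq, ↓reduceIte] <;>
    ring

theorem inv_chainMatrix (hdet : (chainMatrix a b c).det ≠ 0) :
    (chainMatrix a b c)⁻¹ = (chainMatrix a b c).det⁻¹ • chainCofactor a b c := by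
  apply inv_eq_right_inv
  rw [Matrix.mul_smul, chainMatrix_mul_chainCofactor, smul_smul, inv_mul_cancel₀ hdet, one_smul]

theorem inv_chainMatrix_minors (hdet : (chainMatrix a b c).det ≠ 0) :
    let A := (chainMatrix a b c)⁻¹
    let B := (chainMatrix a b c).det
    A 0 0 * A 1 1 - A 0 1 ^ 2 = A 1 1 ∧
    A 0 0 * A 2 2 - A 0 2 ^ 2 = 1 / B ∧
    A 0 0 * A 3 3 - A 0 3 ^ 2 = (1 - b^2) / B ∧
    A 1 1 * A 3 3 - A 1 3 ^ 2 = 1 / B ∧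
    A 2 2 * A 3 3 - A 2 3 ^ 2 = A 2 2 := by
  intro A B
  simp only [A, B, inv_chainMatrix a b c hdet, Matrix.smul_apply, smul_eq_mul, chainCofactor,
    of_apply, cons_val', cons_val_zero, cons_val_fin_one, cons_val_one, cons_val]
  rw [det_chainMatrix] at hdet ⊢
  refine ⟨?_, ?_, ?_, ?_, ?_⟩ <;> field_simp <;> ring

end CoxeterChain

open CoxeterChain in
theorem stmt2_general (u v w : ℝ)
    (hdet : (CSmatrix u v w).det ≠ 0) :
    CSinv u v w 0 0 * CSinv u v w 1 1 - (CSinv u v w 0 1) ^ 2 = CSinv u v w 1 1 ∧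
    CSinv u v w 0 0 * CSinv u v w 2 2 - (CSinv u v w 0 2) ^ 2 = 1 / (CSmatrix u v w).det ∧
    CSinv u v w 0 0 * CSinv u v w 3 3 - (CSinv u v w 0 3) ^ 2 =
      sin (π/v) ^ 2 / (CSmatrix u v w).det ∧
    CSinv u v w 1 1 * CSinv u v w 3 3 - (CSinv u v w 1 3) ^ 2 = 1 / (CSmatrix u v w).det ∧
    CSinv u v w 2 2 * CSinv u v w 3 3 - (CSinv u v w 2 3) ^ 2 = CSinv u v w 2 2 := by
  have hchain : CSmatrix u v w = chainMatrix (cos (π/u)) (cos (π/v)) (cos (π/w)) := rfl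
  rw [hchain] at hdet
  rw [CSinv, hchain, sin_sq]
  exact inv_chainMatrix_minors _ _ _ hdet

theorem stmt2 (u v w : ℝ) (hu : 3 ≤ u) (hv : 3 ≤ v) (hw : 3 ≤ w)
    (hdet : (CSmatrix u v w).det ≠ 0) :
    CSinv u v w 0 0 * CSinv u v w 1 1 - (CSinv u v w 0 1) ^ 2 = CSinv u v w 1 1 ∧
    CSinv u v w 0 0 * CSinv u v w 2 2 - (CSinv u v w 0 2) ^ 2 = 1 / (CSmatrix u v w).det ∧
    CSinv u v w 0 0 * CSinv u v w 3 3 - (CSinv u v w 0 3) ^ 2 =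
      sin (π/v) ^ 2 / (CSmatrix u v w).det ∧
    CSinv u v w 1 1 * CSinv u v w 3 3 - (CSinv u v w 1 3) ^ 2 = 1 / (CSmatrix u v w).det ∧
    CSinv u v w 2 2 * CSinv u v w 3 3 - (CSinv u v w 2 3) ^ 2 = CSinv u v w 2 2 :=
  stmt2_general u v w hdet
end

section
/- (Lemma 3.1) Assume a₀₀ ≠ 0 and define c = a₁ − (a₀₁/a₀₀)a₀, l = a₂ − (a₀₂/a₀₀)a₀, and h = a₃ − (a₀₃/a₀₀)a₀. Then: ⟨c,c⟩ = ⟨c,a₁⟩ = (a₁₁a₀₀ − a₀₁²)/a₀₀ = a₁₁/a₀₀ = sin²(π/w)/(sin²(π/w) − cos²(π/v)); ⟨l,l⟩ = ⟨l,a₂⟩ = (a₂₂a₀₀ − a₀₂²)/a₀₀ = 1/(B·a₀₀) = 1/(sin²(π/w) − cos²(π/v)); and ⟨h,h⟩ = ⟨h,a₃⟩ = (a₃₃a₀₀ − a₀₃²)/a₀₀ = sin²(π/v)/(B·a₀₀) = sin²(π/v)/(sin²(π/w) − cos²(π/v)). -/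
/-!
Subtracting from `aᵢ` its projection `(a₀ᵢ/a₀₀) a₀` gives a vector `e` orthogonal to `a₀`, so
`⟨e, e⟩ = ⟨e, aᵢ⟩ = aᵢᵢ - a₀ᵢ²/a₀₀`. The entries of `b⁻¹` are the cofactors of the tridiagonal
matrix `b` divided by `B`, and the remaining equalities are Jacobi's identity relating `2 × 2`
minors of `b⁻¹` to the complementary minors of `b`, together with `sin² = 1 - cos²`.
-/

open Real Matrix

namespace LinearMap.BilinForm

variable {K V : Type*} [Field K] [AddCommGroup V] [Module K V] (B : LinearMap.BilinForm K V)
  {p : V} (q : V)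

theorem apply_sub_proj_left_self (hB : ∀ x y, B x y = B y x) (hp : B p p ≠ 0) :
    B (q - (B p q / B p p) • p) p = 0 := by
  simp only [map_sub, map_smul, LinearMap.sub_apply, LinearMap.smul_apply, smul_eq_mul,
    div_mul_cancel₀ _ hp, hB q p, sub_self]

theorem apply_sub_proj_sub_proj (hB : ∀ x y, B x y = B y x) (hp : B p p ≠ 0) :
    B (q - (B p q / B p p) • p) (q - (B p q / B p p) • p) =
      B (q - (B p q / B p p) • p) q := by
  rw [map_sub (B _), map_smul, apply_sub_proj_left_self B q hB hp, smul_zero, sub_zero]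

theorem apply_sub_proj_right (hp : B p p ≠ 0) :
    B (q - (B p q / B p p) • p) q = (B q q * B p p - B p q ^ 2) / B p p := by
  simp only [map_sub, map_smul, LinearMap.sub_apply, LinearMap.smul_apply, smul_eq_mul]
  field_simp

end LinearMap.BilinForm

section PathMatrix

variable {R : Type*} [CommRing R] (x y z : R)

def pathGram : Matrix (Fin 4) (Fin 4) R :=
  !![1, -x, 0, 0;
     -x, 1, -y, 0;
     0, -y, 1, -z;
     0, 0, -z, 1]

/-- The adjugate of `pathGram x y z`. -/
def pathAdj : Matrix (Fin 4) (Fin 4) R :=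
  !![1 - y^2 - z^2, x * (1 - z^2), x * y, x * y * z;
     x * (1 - z^2), 1 - z^2, y, y * z;
     x * y, y, 1 - x^2, z * (1 - x^2);
     x * y * z, y * z, z * (1 - x^2), 1 - x^2 - y^2]

theorem det_pathGram : (pathGram x y z).det = 1 - x^2 - y^2 - z^2 + x^2 * z^2 := by
  simp [pathGram, Matrix.det_succ_row_zero, Fin.sum_univ_succ, Fin.succAbove]
  ring

theorem pathGram_mul_pathAdj : pathGram x y z * pathAdj x y z = (pathGram x y z).det • 1 := by
  rw [det_pathGram]
  ext i j
  fin_cases i <;> fin_cases j <;>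
    simp [pathGram, pathAdj, Matrix.mul_apply, Fin.sum_univ_four] <;> ring

end PathMatrix

theorem CSmatrix_eq_pathGram (u v w : ℝ) :
    CSmatrix u v w = pathGram (cos (π/u)) (cos (π/v)) (cos (π/w)) := rfl

theorem CSinv_eq_inv_pathGram (u v w : ℝ) :
    CSinv u v w = (pathGram (cos (π/u)) (cos (π/v)) (cos (π/w)))⁻¹ := rfl

section PathMatrixInv

variable {K : Type*} [Field K] {x y z : K}

theorem inv_pathGram (hD : (pathGram x y z).det ≠ 0) :
    (pathGram x y z)⁻¹ = (pathGram x y z).det⁻¹ • pathAdj x y z :=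
  inv_eq_right_inv <| by
    rw [Matrix.mul_smul, pathGram_mul_pathAdj, smul_smul, inv_mul_cancel₀ hD, one_smul]

theorem pathGram_inv_apply (hD : (pathGram x y z).det ≠ 0) (i j : Fin 4) :
    (pathGram x y z)⁻¹ i j = pathAdj x y z i j / (pathGram x y z).det := by
  rw [inv_pathGram hD, Matrix.smul_apply, smul_eq_mul, inv_mul_eq_div]

theorem det_mul_pathGram_inv_zero_zero (hD : (pathGram x y z).det ≠ 0) :
    (pathGram x y z).det * (pathGram x y z)⁻¹ 0 0 = 1 - y^2 - z^2 := by
  rw [pathGram_inv_apply hD, mul_div_cancel₀ _ hD]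
  rfl

theorem pathGram_inv_one_one_div_zero_zero (hD : (pathGram x y z).det ≠ 0) :
    (pathGram x y z)⁻¹ 1 1 / (pathGram x y z)⁻¹ 0 0 = (1 - z^2) / (1 - y^2 - z^2) := by
  rw [pathGram_inv_apply hD, pathGram_inv_apply hD, div_div_div_cancel_right₀ hD]
  rfl

/- Instances of Jacobi's identity: a `2 × 2` minor of `A⁻¹` is the complementary minor of `A`
divided by `det A`. -/
theorem pathGram_inv_minor_zero_one (hD : (pathGram x y z).det ≠ 0) :
    (pathGram x y z)⁻¹ 1 1 * (pathGram x y z)⁻¹ 0 0 - (pathGram x y z)⁻¹ 0 1 ^ 2 =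
      (pathGram x y z)⁻¹ 1 1 := by
  simp only [pathGram_inv_apply hD, pathAdj, of_apply, cons_val', cons_val_fin_one, cons_val_one,
    cons_val_zero]
  field_simp
  rw [det_pathGram]
  ring

theorem pathGram_inv_minor_zero_two (hD : (pathGram x y z).det ≠ 0) :
    (pathGram x y z)⁻¹ 2 2 * (pathGram x y z)⁻¹ 0 0 - (pathGram x y z)⁻¹ 0 2 ^ 2 =
      (pathGram x y z).det⁻¹ := by
  simp only [pathGram_inv_apply hD, pathAdj, of_apply, cons_val', cons_val, cons_val_fin_one,
    cons_val_one, cons_val_zero]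
  field_simp
  rw [det_pathGram]
  ring

theorem pathGram_inv_minor_zero_three (hD : (pathGram x y z).det ≠ 0) :
    (pathGram x y z)⁻¹ 3 3 * (pathGram x y z)⁻¹ 0 0 - (pathGram x y z)⁻¹ 0 3 ^ 2 =
      (1 - y^2) / (pathGram x y z).det := by
  simp only [pathGram_inv_apply hD, pathAdj, of_apply, cons_val', cons_val, cons_val_fin_one,
    cons_val_one, cons_val_zero]
  field_simp
  rw [det_pathGram]
  ring

end PathMatrixInv

theorem stmt3_general (u v w : ℝ)
    (hdet : (CSmatrix u v w).det ≠ 0)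
    {V : Type*} [AddCommGroup V] [Module ℝ V]
    (Bf : LinearMap.BilinForm ℝ V)
    (hsymm : ∀ x y : V, Bf x y = Bf y x)
    (a : Fin 4 → V)
    (hGram : ∀ i j : Fin 4, Bf (a i) (a j) = CSinv u v w i j)
    (h00 : CSinv u v w 0 0 ≠ 0)
    (c l h : V)
    (hc : c = a 1 - (CSinv u v w 0 1 / CSinv u v w 0 0) • a 0)
    (hl : l = a 2 - (CSinv u v w 0 2 / CSinv u v w 0 0) • a 0)
    (hh : h = a 3 - (CSinv u v w 0 3 / CSinv u v w 0 0) • a 0) :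
    (Bf c c = Bf c (a 1) ∧
      Bf c (a 1) =
        (CSinv u v w 1 1 * CSinv u v w 0 0 - (CSinv u v w 0 1) ^ 2) / CSinv u v w 0 0 ∧
      (CSinv u v w 1 1 * CSinv u v w 0 0 - (CSinv u v w 0 1) ^ 2) / CSinv u v w 0 0 =
        CSinv u v w 1 1 / CSinv u v w 0 0 ∧
      CSinv u v w 1 1 / CSinv u v w 0 0 =
        sin (π/w) ^ 2 / (sin (π/w) ^ 2 - cos (π/v) ^ 2)) ∧
    (Bf l l = Bf l (a 2) ∧
      Bf l (a 2) =
        (CSinv u v w 2 2 * CSinv u v w 0 0 - (CSinv u v w 0 2) ^ 2) / CSinv u v w 0 0 ∧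
      (CSinv u v w 2 2 * CSinv u v w 0 0 - (CSinv u v w 0 2) ^ 2) / CSinv u v w 0 0 =
        1 / ((CSmatrix u v w).det * CSinv u v w 0 0) ∧
      1 / ((CSmatrix u v w).det * CSinv u v w 0 0) =
        1 / (sin (π/w) ^ 2 - cos (π/v) ^ 2)) ∧
    (Bf h h = Bf h (a 3) ∧
      Bf h (a 3) =
        (CSinv u v w 3 3 * CSinv u v w 0 0 - (CSinv u v w 0 3) ^ 2) / CSinv u v w 0 0 ∧
      (CSinv u v w 3 3 * CSinv u v w 0 0 - (CSinv u v w 0 3) ^ 2) / CSinv u v w 0 0 =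
        sin (π/v) ^ 2 / ((CSmatrix u v w).det * CSinv u v w 0 0) ∧
      sin (π/v) ^ 2 / ((CSmatrix u v w).det * CSinv u v w 0 0) =
        sin (π/v) ^ 2 / (sin (π/w) ^ 2 - cos (π/v) ^ 2)) := by
  have hproj (i : Fin 4) (e : V) (he : e = a i - (CSinv u v w 0 i / CSinv u v w 0 0) • a 0) :
      Bf e e = Bf e (a i) ∧ Bf e (a i) =
        (CSinv u v w i i * CSinv u v w 0 0 - CSinv u v w 0 i ^ 2) / CSinv u v w 0 0 := by
    simp only [← hGram] at he h00 ⊢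
    subst he
    exact ⟨Bf.apply_sub_proj_sub_proj _ hsymm h00, Bf.apply_sub_proj_right _ h00⟩
  obtain ⟨hc₁, hc₂⟩ := hproj 1 c hc
  obtain ⟨hl₁, hl₂⟩ := hproj 2 l hl
  obtain ⟨hh₁, hh₂⟩ := hproj 3 h hh
  have hsin_sub_cos : sin (π/w) ^ 2 - cos (π/v) ^ 2 = 1 - cos (π/v) ^ 2 - cos (π/w) ^ 2 := by
    rw [sin_sq]; ring
  rw [hsin_sub_cos, sin_sq (π/v), sin_sq (π/w)]
  rw [CSmatrix_eq_pathGram] at hdet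
  simp only [CSinv_eq_inv_pathGram, CSmatrix_eq_pathGram] at hc₂ hl₂ hh₂ ⊢
  refine ⟨⟨hc₁, hc₂, ?_, ?_⟩, ⟨hl₁, hl₂, ?_, ?_⟩, ⟨hh₁, hh₂, ?_, ?_⟩⟩
  · exact congrArg (· / _) (pathGram_inv_minor_zero_one hdet)
  · exact pathGram_inv_one_one_div_zero_zero hdet
  · rw [pathGram_inv_minor_zero_two hdet, ← one_div, div_div]
  · exact congrArg (1 / ·) (det_mul_pathGram_inv_zero_zero hdet)
  · rw [pathGram_inv_minor_zero_three hdet, div_div]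
  · exact congrArg (_ / ·) (det_mul_pathGram_inv_zero_zero hdet)

theorem stmt3 (u v w : ℝ) (hu : 3 ≤ u) (hv : 3 ≤ v) (hw : 3 ≤ w)
    (hdet : (CSmatrix u v w).det ≠ 0)
    {V : Type*} [AddCommGroup V] [Module ℝ V]
    (Bf : LinearMap.BilinForm ℝ V)
    (hsymm : ∀ x y : V, Bf x y = Bf y x)
    (a : Fin 4 → V)
    (hGram : ∀ i j : Fin 4, Bf (a i) (a j) = CSinv u v w i j)
    (h00 : CSinv u v w 0 0 ≠ 0)
    (c l h : V)
    (hc : c = a 1 - (CSinv u v w 0 1 / CSinv u v w 0 0) • a 0)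
    (hl : l = a 2 - (CSinv u v w 0 2 / CSinv u v w 0 0) • a 0)
    (hh : h = a 3 - (CSinv u v w 0 3 / CSinv u v w 0 0) • a 0) :
    (Bf c c = Bf c (a 1) ∧
      Bf c (a 1) =
        (CSinv u v w 1 1 * CSinv u v w 0 0 - (CSinv u v w 0 1) ^ 2) / CSinv u v w 0 0 ∧
      (CSinv u v w 1 1 * CSinv u v w 0 0 - (CSinv u v w 0 1) ^ 2) / CSinv u v w 0 0 =
        CSinv u v w 1 1 / CSinv u v w 0 0 ∧
      CSinv u v w 1 1 / CSinv u v w 0 0 =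
        sin (π/w) ^ 2 / (sin (π/w) ^ 2 - cos (π/v) ^ 2)) ∧
    (Bf l l = Bf l (a 2) ∧
      Bf l (a 2) =
        (CSinv u v w 2 2 * CSinv u v w 0 0 - (CSinv u v w 0 2) ^ 2) / CSinv u v w 0 0 ∧
      (CSinv u v w 2 2 * CSinv u v w 0 0 - (CSinv u v w 0 2) ^ 2) / CSinv u v w 0 0 =
        1 / ((CSmatrix u v w).det * CSinv u v w 0 0) ∧
      1 / ((CSmatrix u v w).det * CSinv u v w 0 0) =
        1 / (sin (π/w) ^ 2 - cos (π/v) ^ 2)) ∧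
    (Bf h h = Bf h (a 3) ∧
      Bf h (a 3) =
        (CSinv u v w 3 3 * CSinv u v w 0 0 - (CSinv u v w 0 3) ^ 2) / CSinv u v w 0 0 ∧
      (CSinv u v w 3 3 * CSinv u v w 0 0 - (CSinv u v w 0 3) ^ 2) / CSinv u v w 0 0 =
        sin (π/v) ^ 2 / ((CSmatrix u v w).det * CSinv u v w 0 0) ∧
      sin (π/v) ^ 2 / ((CSmatrix u v w).det * CSinv u v w 0 0) =
        sin (π/v) ^ 2 / (sin (π/w) ^ 2 - cos (π/v) ^ 2)) :=
  stmt3_general u v w hdet Bf hsymm a hGram h00 c l h hc hl hh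
end

section
/- (Lemma 3.2) Assume a₃₃ ≠ 0 and define j = a₀ − (a₀₃/a₃₃)a₃, e = a₁ − (a₁₃/a₃₃)a₃, and q = a₂ − (a₂₃/a₃₃)a₃. Then: ⟨j,j⟩ = ⟨j,a₀⟩ = (a₀₀a₃₃ − a₀₃²)/a₃₃ = sin²(π/v)/(B·a₃₃) = sin²(π/v)/(sin²(π/u) − cos²(π/v)); ⟨e,e⟩ = ⟨e,a₁⟩ = (a₁₁a₃₃ − a₁₃²)/a₃₃ = 1/(B·a₃₃) = 1/(sin²(π/u) − cos²(π/v)); and ⟨q,q⟩ = ⟨q,a₂⟩ = (a₂₂a₃₃ − a₂₃²)/a₃₃ = a₂₂/a₃₃ = sin²(π/u)/(sin²(π/u) − cos²(π/v)). -/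
open Real Matrix

/-!
Subtracting from `aᵢ` its projection onto `a₃` gives a vector orthogonal to `a₃`, so its square
equals its pairing with `aᵢ`, which is the Schur complement `(aᵢᵢa₃₃ - aᵢ₃²)/a₃₃`. Writing
`b⁻¹ = adj b / B`, the numerator `aᵢᵢa₃₃ - aᵢ₃²` is a `2 × 2` minor of `b⁻¹`, hence (Jacobi) the
complementary minor of `b` divided by `B`: this is `sin²(π/v)`, `1`, `sin²(π/u)` for `i = 0, 1, 2`.
Finally `B a₃₃ = 1 - cos²(π/u) - cos²(π/v) = sin²(π/u) - cos²(π/v)`, the `(3,3)` cofactor of `b`.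
-/

namespace LinearMap.BilinForm

variable {K V : Type*} [Field K] [AddCommGroup V] [Module K V]
  (B : LinearMap.BilinForm K V) (x y : V)

theorem apply_sub_proj_right_eq_zero (hy : B y y ≠ 0) :
    B (x - (B x y / B y y) • y) y = 0 := by
  rw [sub_left, smul_left, div_mul_cancel₀ _ hy, sub_self]

theorem apply_sub_proj_self (hy : B y y ≠ 0) :
    B (x - (B x y / B y y) • y) (x - (B x y / B y y) • y) =
      B (x - (B x y / B y y) • y) x := by
  conv_lhs => rw [map_sub, map_smul, apply_sub_proj_right_eq_zero B x y hy, smul_zero, sub_zero]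

variable {B}

namespace IsSymm

theorem apply_sub_proj_left (hB : B.IsSymm) (hy : B y y ≠ 0) :
    B (x - (B x y / B y y) • y) x = (B x x * B y y - B x y ^ 2) / B y y := by
  rw [sub_left, smul_left, hB.eq y x]
  field_simp

theorem apply_sub_proj_of_gram {ι : Type*} {a : ι → V} {G : Matrix ι ι K} (hB : B.IsSymm)
    (hGram : ∀ i j, B (a i) (a j) = G i j) (i : ι) {k : ι} (hk : G k k ≠ 0) :
    B (a i - (G i k / G k k) • a k) (a i - (G i k / G k k) • a k) =
        B (a i - (G i k / G k k) • a k) (a i) ∧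
      B (a i - (G i k / G k k) • a k) (a i) = (G i i * G k k - G i k ^ 2) / G k k := by
  rw [← hGram] at hk
  simp only [← hGram]
  exact ⟨apply_sub_proj_self B _ _ hk, hB.apply_sub_proj_left _ _ hk⟩

end IsSymm

end LinearMap.BilinForm

section CoxeterSchlafli

variable (u v w : ℝ)

noncomputable def CSadj : Matrix (Fin 4) (Fin 4) ℝ :=
  let c₁ := cos (π/u); let c₂ := cos (π/v); let c₃ := cos (π/w)
  !![1 - c₂^2 - c₃^2, c₁ * (1 - c₃^2), c₁ * c₂, c₁ * c₂ * c₃;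
     c₁ * (1 - c₃^2), 1 - c₃^2, c₂, c₂ * c₃;
     c₁ * c₂, c₂, 1 - c₁^2, c₃ * (1 - c₁^2);
     c₁ * c₂ * c₃, c₂ * c₃, c₃ * (1 - c₁^2), 1 - c₁^2 - c₂^2]

theorem det_CSmatrix : (CSmatrix u v w).det =
    1 - cos (π/u)^2 - cos (π/v)^2 - cos (π/w)^2 + cos (π/u)^2 * cos (π/w)^2 := by
  simp [CSmatrix, det_succ_row_zero, Fin.sum_univ_succ, Fin.succAbove]
  ring

theorem CSmatrix_mul_CSadj : CSmatrix u v w * CSadj u v w = (CSmatrix u v w).det • 1 := by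
  rw [det_CSmatrix]
  ext i j
  fin_cases i <;> fin_cases j <;>
    simp [CSmatrix, CSadj, mul_apply, Fin.sum_univ_four, one_apply] <;> ring

variable {u v w}

theorem CSinv_apply (hdet : (CSmatrix u v w).det ≠ 0) (i j : Fin 4) :
    CSinv u v w i j = CSadj u v w i j / (CSmatrix u v w).det := by
  have : CSinv u v w = (CSmatrix u v w).det⁻¹ • CSadj u v w := by
    refine inv_eq_right_inv ?_
    rw [Matrix.mul_smul, CSmatrix_mul_CSadj, smul_smul, inv_mul_cancel₀ hdet, one_smul]
  rw [this, Matrix.smul_apply, smul_eq_mul, inv_mul_eq_div]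

theorem det_mul_CSinv_three_three (hdet : (CSmatrix u v w).det ≠ 0) :
    (CSmatrix u v w).det * CSinv u v w 3 3 = sin (π/u) ^ 2 - cos (π/v) ^ 2 := by
  rw [CSinv_apply hdet, mul_div_cancel₀ _ hdet, sin_sq]
  simp [CSadj]

theorem CSinv_two_two (hdet : (CSmatrix u v w).det ≠ 0) :
    CSinv u v w 2 2 = sin (π/u) ^ 2 / (CSmatrix u v w).det := by
  simp [CSinv_apply hdet, CSadj, sin_sq]

theorem CSinv_minor_zero_three (hdet : (CSmatrix u v w).det ≠ 0) :
    CSinv u v w 0 0 * CSinv u v w 3 3 - CSinv u v w 0 3 ^ 2 =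
      sin (π/v) ^ 2 / (CSmatrix u v w).det := by
  simp only [CSinv_apply hdet, CSadj, of_apply, cons_val', cons_val, cons_val_fin_one, cons_val_one, cons_val_zero]
  field_simp
  rw [sin_sq, det_CSmatrix]
  ring

theorem CSinv_minor_one_three (hdet : (CSmatrix u v w).det ≠ 0) :
    CSinv u v w 1 1 * CSinv u v w 3 3 - CSinv u v w 1 3 ^ 2 = 1 / (CSmatrix u v w).det := by
  simp only [CSinv_apply hdet, CSadj, of_apply, cons_val', cons_val, cons_val_fin_one, cons_val_one, cons_val_zero]
  field_simp
  rw [det_CSmatrix]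
  ring

theorem CSinv_minor_two_three (hdet : (CSmatrix u v w).det ≠ 0) :
    CSinv u v w 2 2 * CSinv u v w 3 3 - CSinv u v w 2 3 ^ 2 =
      sin (π/u) ^ 2 / (CSmatrix u v w).det := by
  simp only [CSinv_apply hdet, CSadj, of_apply, cons_val', cons_val, cons_val_fin_one, cons_val_one, cons_val_zero]
  field_simp
  rw [sin_sq, det_CSmatrix]
  ring

end CoxeterSchlafli

theorem stmt4_general (u v w : ℝ)
    (hdet : (CSmatrix u v w).det ≠ 0)
    {V : Type*} [AddCommGroup V] [Module ℝ V]
    (Bf : LinearMap.BilinForm ℝ V)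
    (hsymm : ∀ x y : V, Bf x y = Bf y x)
    (a : Fin 4 → V)
    (hGram : ∀ i j : Fin 4, Bf (a i) (a j) = CSinv u v w i j)
    (h33 : CSinv u v w 3 3 ≠ 0)
    (j e q : V)
    (hj : j = a 0 - (CSinv u v w 0 3 / CSinv u v w 3 3) • a 3)
    (he : e = a 1 - (CSinv u v w 1 3 / CSinv u v w 3 3) • a 3)
    (hq : q = a 2 - (CSinv u v w 2 3 / CSinv u v w 3 3) • a 3) :
    (Bf j j = Bf j (a 0) ∧
      Bf j (a 0) =
        (CSinv u v w 0 0 * CSinv u v w 3 3 - (CSinv u v w 0 3) ^ 2) / CSinv u v w 3 3 ∧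
      (CSinv u v w 0 0 * CSinv u v w 3 3 - (CSinv u v w 0 3) ^ 2) / CSinv u v w 3 3 =
        sin (π/v) ^ 2 / ((CSmatrix u v w).det * CSinv u v w 3 3) ∧
      sin (π/v) ^ 2 / ((CSmatrix u v w).det * CSinv u v w 3 3) =
        sin (π/v) ^ 2 / (sin (π/u) ^ 2 - cos (π/v) ^ 2)) ∧
    (Bf e e = Bf e (a 1) ∧
      Bf e (a 1) =
        (CSinv u v w 1 1 * CSinv u v w 3 3 - (CSinv u v w 1 3) ^ 2) / CSinv u v w 3 3 ∧
      (CSinv u v w 1 1 * CSinv u v w 3 3 - (CSinv u v w 1 3) ^ 2) / CSinv u v w 3 3 =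
        1 / ((CSmatrix u v w).det * CSinv u v w 3 3) ∧
      1 / ((CSmatrix u v w).det * CSinv u v w 3 3) =
        1 / (sin (π/u) ^ 2 - cos (π/v) ^ 2)) ∧
    (Bf q q = Bf q (a 2) ∧
      Bf q (a 2) =
        (CSinv u v w 2 2 * CSinv u v w 3 3 - (CSinv u v w 2 3) ^ 2) / CSinv u v w 3 3 ∧
      (CSinv u v w 2 2 * CSinv u v w 3 3 - (CSinv u v w 2 3) ^ 2) / CSinv u v w 3 3 =
        CSinv u v w 2 2 / CSinv u v w 3 3 ∧
      CSinv u v w 2 2 / CSinv u v w 3 3 =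
        sin (π/u) ^ 2 / (sin (π/u) ^ 2 - cos (π/v) ^ 2)) := by
  have hB : Bf.IsSymm := ⟨hsymm⟩
  have hdet_mul := det_mul_CSinv_three_three hdet
  subst hj he hq
  obtain ⟨hj₁, hj₂⟩ := hB.apply_sub_proj_of_gram hGram 0 h33
  obtain ⟨he₁, he₂⟩ := hB.apply_sub_proj_of_gram hGram 1 h33
  obtain ⟨hq₁, hq₂⟩ := hB.apply_sub_proj_of_gram hGram 2 h33
  refine ⟨⟨hj₁, hj₂, ?_, ?_⟩, ⟨he₁, he₂, ?_, ?_⟩, ⟨hq₁, hq₂, ?_, ?_⟩⟩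
  · rw [CSinv_minor_zero_three hdet, div_div]
  · rw [hdet_mul]
  · rw [CSinv_minor_one_three hdet, div_div]
  · rw [hdet_mul]
  · rw [CSinv_minor_two_three hdet, CSinv_two_two hdet]
  · rw [CSinv_two_two hdet, div_div, hdet_mul]

theorem stmt4 (u v w : ℝ) (hu : 3 ≤ u) (hv : 3 ≤ v) (hw : 3 ≤ w)
    (hdet : (CSmatrix u v w).det ≠ 0)
    {V : Type*} [AddCommGroup V] [Module ℝ V]
    (Bf : LinearMap.BilinForm ℝ V)
    (hsymm : ∀ x y : V, Bf x y = Bf y x)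
    (a : Fin 4 → V)
    (hGram : ∀ i j : Fin 4, Bf (a i) (a j) = CSinv u v w i j)
    (h33 : CSinv u v w 3 3 ≠ 0)
    (j e q : V)
    (hj : j = a 0 - (CSinv u v w 0 3 / CSinv u v w 3 3) • a 3)
    (he : e = a 1 - (CSinv u v w 1 3 / CSinv u v w 3 3) • a 3)
    (hq : q = a 2 - (CSinv u v w 2 3 / CSinv u v w 3 3) • a 3) :
    (Bf j j = Bf j (a 0) ∧
      Bf j (a 0) =
        (CSinv u v w 0 0 * CSinv u v w 3 3 - (CSinv u v w 0 3) ^ 2) / CSinv u v w 3 3 ∧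
      (CSinv u v w 0 0 * CSinv u v w 3 3 - (CSinv u v w 0 3) ^ 2) / CSinv u v w 3 3 =
        sin (π/v) ^ 2 / ((CSmatrix u v w).det * CSinv u v w 3 3) ∧
      sin (π/v) ^ 2 / ((CSmatrix u v w).det * CSinv u v w 3 3) =
        sin (π/v) ^ 2 / (sin (π/u) ^ 2 - cos (π/v) ^ 2)) ∧
    (Bf e e = Bf e (a 1) ∧
      Bf e (a 1) =
        (CSinv u v w 1 1 * CSinv u v w 3 3 - (CSinv u v w 1 3) ^ 2) / CSinv u v w 3 3 ∧
      (CSinv u v w 1 1 * CSinv u v w 3 3 - (CSinv u v w 1 3) ^ 2) / CSinv u v w 3 3 =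
        1 / ((CSmatrix u v w).det * CSinv u v w 3 3) ∧
      1 / ((CSmatrix u v w).det * CSinv u v w 3 3) =
        1 / (sin (π/u) ^ 2 - cos (π/v) ^ 2)) ∧
    (Bf q q = Bf q (a 2) ∧
      Bf q (a 2) =
        (CSinv u v w 2 2 * CSinv u v w 3 3 - (CSinv u v w 2 3) ^ 2) / CSinv u v w 3 3 ∧
      (CSinv u v w 2 2 * CSinv u v w 3 3 - (CSinv u v w 2 3) ^ 2) / CSinv u v w 3 3 =
        CSinv u v w 2 2 / CSinv u v w 3 3 ∧
      CSinv u v w 2 2 / CSinv u v w 3 3 =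
        sin (π/u) ^ 2 / (sin (π/u) ^ 2 - cos (π/v) ^ 2)) :=
  stmt4_general u v w hdet Bf hsymm a hGram h33 j e q hj he hq
end

section
/- (Distance formula (4.3), edge A₃A₀) Assume B < 0, sin²(π/u) > cos²(π/v), and sin²(π/w) > cos²(π/v) (so that a₀₀ < 0 and a₃₃ < 0, i.e. both principal vertices A₀ and A₃ are proper points). Then −a₀₃/√(a₀₀·a₃₃) = √(1 − sin²(π/v)/(B·a₀₀·a₃₃)). (This quantity is cosh of the hyperbolic distance between the principal vertices A₃ and A₀ of the orthoscheme W_{uvw}.) -/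
open Real Matrix

/-! Writing `a, b, c` for `cos (π/u), cos (π/v), cos (π/w)`, the Coxeter–Schläfli matrix is
tridiagonal and its inverse is `B⁻¹` times an explicit adjugate, giving `a₀₀ = (1 - b² - c²)/B`,
`a₃₃ = (1 - a² - b²)/B` and `a₀₃ = abc/B`. Jacobi's complementary-minor identity
`a₀₀ a₃₃ - a₀₃² = (1 - b²)/B` (the middle `2 × 2` block of the matrix has determinant
`sin²(π/v)`) then gives the formula after dividing by `a₀₀ a₃₃ > 0`; the sign of the square root
is fixed by `a₀₃ ≤ 0`. -/

theorem neg_div_sqrt_eq_sqrt_one_sub {x p s : ℝ} (hx : x ≤ 0) (hp : 0 < p) (h : x ^ 2 = p - s) :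
    -x / √p = √(1 - s / p) := by
  rw [← sqrt_sq (neg_nonneg.mpr hx), ← sqrt_div' _ hp.le, neg_sq, h, sub_div, div_self hp.ne']

theorem cos_pi_div_pos {t : ℝ} (ht : 2 < t) : 0 < cos (π / t) := by
  apply cos_pos_of_mem_Ioo
  constructor
  · linarith [pi_pos, div_pos pi_pos (by linarith : (0 : ℝ) < t)]
  · rw [div_lt_div_iff₀ (by linarith) two_pos]
    nlinarith [pi_pos]

def pathMatrix {R : Type*} [Ring R] (a b c : R) : Matrix (Fin 4) (Fin 4) R :=
  !![1, -a, 0, 0;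
     -a, 1, -b, 0;
     0, -b, 1, -c;
     0, 0, -c, 1]

def pathAdjugate {R : Type*} [Ring R] (a b c : R) : Matrix (Fin 4) (Fin 4) R :=
  !![1 - b^2 - c^2, a * (1 - c^2), a * b, a * b * c;
     a * (1 - c^2), 1 - c^2, b, b * c;
     a * b, b, 1 - a^2, c * (1 - a^2);
     a * b * c, b * c, c * (1 - a^2), 1 - a^2 - b^2]

namespace pathMatrix

section CommRing

variable {R : Type*} [CommRing R] (a b c : R)

theorem det_eq : (pathMatrix a b c).det = (1 - a^2) * (1 - c^2) - b^2 := by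
  rw [pathMatrix, Matrix.det_succ_row_zero]
  simp [Fin.sum_univ_succ, Matrix.det_fin_three, Matrix.submatrix, Fin.succAbove]
  ring

theorem mul_pathAdjugate : pathMatrix a b c * pathAdjugate a b c = (pathMatrix a b c).det • 1 := by
  rw [det_eq]
  ext i j
  fin_cases i <;> fin_cases j <;>
    simp [pathMatrix, pathAdjugate, Matrix.mul_apply, Fin.sum_univ_four] <;> ring

end CommRing

section Field

variable {K : Type*} [Field K] {a b c : K}

theorem inv_eq (hB : (pathMatrix a b c).det ≠ 0) :
    (pathMatrix a b c)⁻¹ = (pathMatrix a b c).det⁻¹ • pathAdjugate a b c := by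
  refine Matrix.inv_eq_right_inv ?_
  rw [Matrix.mul_smul, mul_pathAdjugate, smul_smul, inv_mul_cancel₀ hB, one_smul]

theorem inv_apply_zero_zero (hB : (pathMatrix a b c).det ≠ 0) :
    (pathMatrix a b c)⁻¹ 0 0 = (1 - b^2 - c^2) / (pathMatrix a b c).det := by
  simp [inv_eq hB, pathAdjugate, div_eq_inv_mul]

theorem inv_apply_three_three (hB : (pathMatrix a b c).det ≠ 0) :
    (pathMatrix a b c)⁻¹ 3 3 = (1 - a^2 - b^2) / (pathMatrix a b c).det := by
  simp [inv_eq hB, pathAdjugate, div_eq_inv_mul]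

theorem inv_apply_zero_three (hB : (pathMatrix a b c).det ≠ 0) :
    (pathMatrix a b c)⁻¹ 0 3 = a * b * c / (pathMatrix a b c).det := by
  simp [inv_eq hB, pathAdjugate, div_eq_inv_mul]

theorem inv_zero_zero_mul_inv_three_three_sub_sq (hB : (pathMatrix a b c).det ≠ 0) :
    (pathMatrix a b c)⁻¹ 0 0 * (pathMatrix a b c)⁻¹ 3 3 - (pathMatrix a b c)⁻¹ 0 3 ^ 2 =
      (1 - b^2) / (pathMatrix a b c).det := by
  rw [inv_apply_zero_zero hB, inv_apply_three_three hB, inv_apply_zero_three hB]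
  field_simp
  rw [det_eq]
  ring

end Field

theorem corner_entries_of_det_neg {a b c : ℝ} (habc : 0 ≤ a * b * c)
    (hB : (pathMatrix a b c).det < 0) (hbc : b ^ 2 + c ^ 2 < 1) (hab : a ^ 2 + b ^ 2 < 1) :
    (pathMatrix a b c)⁻¹ 0 0 < 0 ∧ (pathMatrix a b c)⁻¹ 3 3 < 0 ∧
      -(pathMatrix a b c)⁻¹ 0 3 / √((pathMatrix a b c)⁻¹ 0 0 * (pathMatrix a b c)⁻¹ 3 3) =
        √(1 - (1 - b ^ 2) /
          ((pathMatrix a b c).det * (pathMatrix a b c)⁻¹ 0 0 * (pathMatrix a b c)⁻¹ 3 3)) := by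
  have h00 : (pathMatrix a b c)⁻¹ 0 0 < 0 := by
    rw [inv_apply_zero_zero hB.ne]; exact div_neg_of_pos_of_neg (by linarith) hB
  have h33 : (pathMatrix a b c)⁻¹ 3 3 < 0 := by
    rw [inv_apply_three_three hB.ne]; exact div_neg_of_pos_of_neg (by linarith) hB
  have h03 : (pathMatrix a b c)⁻¹ 0 3 ≤ 0 := by
    rw [inv_apply_zero_three hB.ne]; exact div_nonpos_of_nonneg_of_nonpos habc hB.le
  refine ⟨h00, h33, ?_⟩
  rw [mul_assoc, ← div_div]
  refine neg_div_sqrt_eq_sqrt_one_sub h03 (mul_pos_of_neg_of_neg h00 h33) ?_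
  linarith [inv_zero_zero_mul_inv_three_three_sub_sq hB.ne]

end pathMatrix

theorem CSmatrix_eq_pathMatrix (u v w : ℝ) :
    CSmatrix u v w = pathMatrix (cos (π/u)) (cos (π/v)) (cos (π/w)) := rfl

theorem stmt9 (u v w : ℝ) (hu : 3 ≤ u) (hv : 3 ≤ v) (hw : 3 ≤ w)
    (hBneg : (CSmatrix u v w).det < 0)
    (h1 : cos (π/v) ^ 2 < sin (π/u) ^ 2)
    (h2 : cos (π/v) ^ 2 < sin (π/w) ^ 2) :
    CSinv u v w 0 0 < 0 ∧ CSinv u v w 3 3 < 0 ∧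
    -CSinv u v w 0 3 / Real.sqrt (CSinv u v w 0 0 * CSinv u v w 3 3) =
      Real.sqrt (1 - sin (π/v) ^ 2 /
        ((CSmatrix u v w).det * CSinv u v w 0 0 * CSinv u v w 3 3)) := by
  have hcos : 0 ≤ cos (π/u) * cos (π/v) * cos (π/w) :=
    (mul_pos (mul_pos (cos_pi_div_pos (by linarith)) (cos_pi_div_pos (by linarith)))
      (cos_pi_div_pos (by linarith))).le
  rw [CSinv, CSmatrix_eq_pathMatrix, sin_sq] at *
  exact pathMatrix.corner_entries_of_det_neg hcos hBneg
    (by linarith [sin_sq_add_cos_sq (π/w)]) (by linarith [sin_sq_add_cos_sq (π/u)])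
end

section
/- (Distance formula (4.4), segment A₃F₀₃) Assume u = w, B < 0, and sin²(π/u) > cos²(π/v) (so a₀₀ = a₃₃ < 0 and a₀₀ + a₀₃ < 0). Then for the midpoint vector f₀₃ = a₀ + a₃ one has −⟨a₃, f₀₃⟩/√(⟨a₃,a₃⟩·⟨f₀₃,f₀₃⟩) = √(a₀₃/(2a₃₃) + 1/2). Moreover, if d ≥ 0 is the real number with cosh d = −a₀₃/√(a₀₀·a₃₃), then cosh(d/2) = √(a₀₃/(2a₃₃) + 1/2); that is, F₀₃ is the hyperbolic midpoint of the segment A₀A₃. -/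
open Real Matrix

/-!
For `u = w` the orthoscheme matrix is invariant under the reversal `i ↦ 3 - i`, so
`a₀₀ = a₃₃` and `a₀₃ = a₃₀`, and `f₀₃ = a₀ + a₃` is equidistant from `A₀` and `A₃`. With
`x = cos (π/u)`, `y = cos (π/v)` and `B = (1 - x²)² - y²` one has `a₃₃ = (1 - x² - y²)/B` and
`a₀₀ + a₀₃ = (1 - y)(1 + y - x²)/B`, both negative since `y² < sin² (π/u) = 1 - x²` and `B < 0`.
The distance formula then reduces to `cosh² (d/2) = (cosh d + 1)/2`.
-/

lemma CSmatrix_uvu_det (u v : ℝ) :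
    (CSmatrix u v u).det = (1 - cos (π/u)^2)^2 - cos (π/v)^2 := by
  simp [CSmatrix, Matrix.det_succ_row_zero, Fin.sum_univ_succ,
    show ((1:Fin 4).succAbove 2) = 3 from rfl]
  ring

lemma CSinv_uvu (u v : ℝ) (hB : (1 - cos (π/u)^2)^2 - cos (π/v)^2 ≠ 0) :
    CSinv u v u = ((1 - cos (π/u)^2)^2 - cos (π/v)^2)⁻¹ •
      !![1 - cos (π/u)^2 - cos (π/v)^2, cos (π/u)*(1 - cos (π/u)^2), cos (π/u)*cos (π/v),
          cos (π/u)^2*cos (π/v);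
         cos (π/u)*(1 - cos (π/u)^2), 1 - cos (π/u)^2, cos (π/v), cos (π/u)*cos (π/v);
         cos (π/u)*cos (π/v), cos (π/v), 1 - cos (π/u)^2, cos (π/u)*(1 - cos (π/u)^2);
         cos (π/u)^2*cos (π/v), cos (π/u)*cos (π/v), cos (π/u)*(1 - cos (π/u)^2),
          1 - cos (π/u)^2 - cos (π/v)^2] := by
  apply Matrix.inv_eq_right_inv
  ext i j
  fin_cases i <;> fin_cases j <;>
    simp [CSmatrix, Matrix.mul_apply, Fin.sum_univ_four] <;>
    field_simp <;> ring

section Entries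

variable (u v : ℝ) (hB : (1 - cos (π/u)^2)^2 - cos (π/v)^2 ≠ 0)
include hB

lemma CSinv_uvu_zero_zero :
    CSinv u v u 0 0 = (1 - cos (π/u)^2 - cos (π/v)^2) / ((1 - cos (π/u)^2)^2 - cos (π/v)^2) := by
  simp [CSinv_uvu u v hB, div_eq_inv_mul]

lemma CSinv_uvu_three_three :
    CSinv u v u 3 3 = (1 - cos (π/u)^2 - cos (π/v)^2) / ((1 - cos (π/u)^2)^2 - cos (π/v)^2) := by
  simp [CSinv_uvu u v hB, div_eq_inv_mul]

lemma CSinv_uvu_zero_three :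
    CSinv u v u 0 3 = cos (π/u)^2 * cos (π/v) / ((1 - cos (π/u)^2)^2 - cos (π/v)^2) := by
  simp [CSinv_uvu u v hB, div_eq_inv_mul]

lemma CSinv_uvu_three_zero :
    CSinv u v u 3 0 = cos (π/u)^2 * cos (π/v) / ((1 - cos (π/u)^2)^2 - cos (π/v)^2) := by
  simp [CSinv_uvu u v hB, div_eq_inv_mul]

end Entries

section Signs

variable {u v : ℝ} (hy : 0 ≤ cos (π/v)) (h1 : cos (π/v)^2 < sin (π/u)^2)
  (hB : (1 - cos (π/u)^2)^2 - cos (π/v)^2 < 0)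
include hB

include h1 in
lemma CSinv_uvu_three_three_neg : CSinv u v u 3 3 < 0 := by
  rw [CSinv_uvu_three_three u v hB.ne]
  exact div_neg_of_pos_of_neg (by linarith [sin_sq (π/u)]) hB

include hy h1 in
lemma CSinv_uvu_zero_zero_add_zero_three_neg : CSinv u v u 0 0 + CSinv u v u 0 3 < 0 := by
  rw [CSinv_uvu_zero_zero u v hB.ne, CSinv_uvu_zero_three u v hB.ne, ← add_div]
  have hxy : cos (π/v)^2 < 1 - cos (π/u)^2 := by linarith [sin_sq (π/u)]
  have hy1 : cos (π/v) < 1 := by nlinarith [sq_nonneg (cos (π/u))]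
  have hpos : 0 < (1 - cos (π/v)) * (1 + cos (π/v) - cos (π/u)^2) :=
    mul_pos (by linarith) (by nlinarith)
  exact div_neg_of_pos_of_neg (by linarith) hB

end Signs

lemma cos_pi_div_nonneg {v : ℝ} (hv : 2 ≤ v) : 0 ≤ cos (π / v) := by
  apply cos_nonneg_of_mem_Icc
  constructor
  · linarith [div_nonneg pi_pos.le (by linarith : (0:ℝ) ≤ v), pi_pos]
  · rw [div_le_div_iff₀ (by linarith) two_pos]
    nlinarith [pi_pos]

lemma cosh_half_eq_sqrt (x : ℝ) : cosh (x / 2) = √((cosh x + 1) / 2) := by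
  obtain ⟨y, rfl⟩ : ∃ y, x = 2 * y := ⟨x / 2, by ring⟩
  have hdouble : (cosh (2 * y) + 1) / 2 = cosh y ^ 2 := by
    rw [cosh_two_mul, cosh_sq]
    ring
  rw [mul_div_cancel_left₀ _ two_ne_zero, hdouble, sqrt_sq (cosh_pos y).le]

lemma neg_div_sqrt_mul_self_of_neg {t : ℝ} (ht : t < 0) (c : ℝ) : -c / √(t * t) = c / t := by
  rw [← neg_mul_neg, sqrt_mul_self (by linarith), neg_div_neg_eq]

lemma neg_div_sqrt_midpoint {V : Type*} [AddCommGroup V] [Module ℝ V]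
    (Bf : LinearMap.BilinForm ℝ V) {p q : V} {t c : ℝ}
    (hpp : Bf p p = t) (hqq : Bf q q = t) (hpq : Bf p q = c) (hqp : Bf q p = c)
    (ht : t < 0) (hct : c + t < 0) :
    -Bf q (p + q) / √(Bf q q * Bf (p + q) (p + q)) = √(c / (2 * t) + 1 / 2) := by
  have hqf : Bf q (p + q) = c + t := by rw [map_add, hqp, hqq]
  have hff : Bf (p + q) (p + q) = (c + t) * 2 := by
    simp only [map_add, LinearMap.add_apply, hpp, hqq, hpq, hqp]
    ring
  have harg : c / (2 * t) + 1 / 2 = (c + t) ^ 2 / (t * ((c + t) * 2)) := by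
    field_simp [ht.ne, hct.ne]
  rw [hqf, hff, hqq, harg, sqrt_div (sq_nonneg _), sqrt_sq_eq_abs, abs_of_neg hct]

theorem stmt10_general (u v w : ℝ) (hv : 3 ≤ v)
    {V : Type*} [AddCommGroup V] [Module ℝ V]
    (Bf : LinearMap.BilinForm ℝ V)
    (a : Fin 4 → V)
    (hGram : ∀ i j : Fin 4, Bf (a i) (a j) = CSinv u v w i j)
    (huw : u = w) (hBneg : (CSmatrix u v w).det < 0)
    (h1 : cos (π/v) ^ 2 < sin (π/u) ^ 2)
    (f : V) (hf : f = a 0 + a 3) :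
    CSinv u v w 0 0 = CSinv u v w 3 3 ∧ CSinv u v w 3 3 < 0 ∧
    CSinv u v w 0 0 + CSinv u v w 0 3 < 0 ∧
    -Bf (a 3) f / Real.sqrt (Bf (a 3) (a 3) * Bf f f) =
      Real.sqrt (CSinv u v w 0 3 / (2 * CSinv u v w 3 3) + 1/2) ∧
    (∀ d : ℝ, 0 ≤ d →
      Real.cosh d = -CSinv u v w 0 3 / Real.sqrt (CSinv u v w 0 0 * CSinv u v w 3 3) →
      Real.cosh (d/2) = Real.sqrt (CSinv u v w 0 3 / (2 * CSinv u v w 3 3) + 1/2)) := by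
  subst huw
  have hB : (1 - cos (π/u)^2)^2 - cos (π/v)^2 < 0 := CSmatrix_uvu_det u v ▸ hBneg
  have hdiag : CSinv u v u 0 0 = CSinv u v u 3 3 := by
    rw [CSinv_uvu_zero_zero u v hB.ne, CSinv_uvu_three_three u v hB.ne]
  have hflip : CSinv u v u 3 0 = CSinv u v u 0 3 := by
    rw [CSinv_uvu_three_zero u v hB.ne, CSinv_uvu_zero_three u v hB.ne]
  have ht := CSinv_uvu_three_three_neg h1 hB
  have hsum := CSinv_uvu_zero_zero_add_zero_three_neg (cos_pi_div_nonneg (by linarith)) h1 hB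
  refine ⟨hdiag, ht, hsum, ?_, fun d _ hd => ?_⟩
  · rw [hf]
    exact neg_div_sqrt_midpoint Bf (hdiag ▸ hGram 0 0) (hGram 3 3) (hGram 0 3)
      (hflip ▸ hGram 3 0) ht (by linarith)
  · rw [cosh_half_eq_sqrt, hd, hdiag, neg_div_sqrt_mul_self_of_neg ht]
    congr 1
    field_simp

theorem stmt10 (u v w : ℝ) (hu : 3 ≤ u) (hv : 3 ≤ v) (hw : 3 ≤ w)
    (hdet : (CSmatrix u v w).det ≠ 0)
    {V : Type*} [AddCommGroup V] [Module ℝ V]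
    (Bf : LinearMap.BilinForm ℝ V)
    (hsymm : ∀ x y : V, Bf x y = Bf y x)
    (a : Fin 4 → V)
    (hGram : ∀ i j : Fin 4, Bf (a i) (a j) = CSinv u v w i j)
    (huw : u = w) (hBneg : (CSmatrix u v w).det < 0)
    (h1 : cos (π/v) ^ 2 < sin (π/u) ^ 2)
    (f : V) (hf : f = a 0 + a 3) :
    CSinv u v w 0 0 = CSinv u v w 3 3 ∧ CSinv u v w 3 3 < 0 ∧
    CSinv u v w 0 0 + CSinv u v w 0 3 < 0 ∧
    -Bf (a 3) f / Real.sqrt (Bf (a 3) (a 3) * Bf f f) =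
      Real.sqrt (CSinv u v w 0 3 / (2 * CSinv u v w 3 3) + 1/2) ∧
    (∀ d : ℝ, 0 ≤ d →
      Real.cosh d = -CSinv u v w 0 3 / Real.sqrt (CSinv u v w 0 0 * CSinv u v w 3 3) →
      Real.cosh (d/2) = Real.sqrt (CSinv u v w 0 3 / (2 * CSinv u v w 3 3) + 1/2)) :=
  stmt10_general u v w hv Bf a hGram huw hBneg h1 f hf
end

section
/- (Distance formula (4.6), segment A₂F₁₂) Assume u = w and B < 0 (so a₁₁ = a₂₂ < 0 and a₁₁ + a₁₂ < 0). Then for the midpoint vector f₁₂ = a₁ + a₂ one has −⟨a₂, f₁₂⟩/√(⟨a₂,a₂⟩·⟨f₁₂,f₁₂⟩) = √(a₁₂/(2a₂₂) + 1/2) = √(1/2 + cos(π/v)/(2·sin²(π/u))). Moreover, if d ≥ 0 is the real number with cosh d = −a₁₂/√(a₁₁·a₂₂), then cosh(d/2) = √(a₁₂/(2a₂₂) + 1/2); that is, F₁₂ is the hyperbolic midpoint of the segment A₁A₂. -/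
open Real Matrix

theorem stmt15 (u v w : ℝ) (hu : 3 ≤ u) (hv : 3 ≤ v) (hw : 3 ≤ w)
    (hdet : (CSmatrix u v w).det ≠ 0)
    {V : Type*} [AddCommGroup V] [Module ℝ V]
    (Bf : LinearMap.BilinForm ℝ V)
    (hsymm : ∀ x y : V, Bf x y = Bf y x)
    (a : Fin 4 → V)
    (hGram : ∀ i j : Fin 4, Bf (a i) (a j) = CSinv u v w i j)
    (huw : u = w) (hBneg : (CSmatrix u v w).det < 0)
    (f : V) (hf : f = a 1 + a 2) :
    CSinv u v w 1 1 = CSinv u v w 2 2 ∧ CSinv u v w 2 2 < 0 ∧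
    CSinv u v w 1 1 + CSinv u v w 1 2 < 0 ∧
    -Bf (a 2) f / Real.sqrt (Bf (a 2) (a 2) * Bf f f) =
      Real.sqrt (CSinv u v w 1 2 / (2 * CSinv u v w 2 2) + 1/2) ∧
    Real.sqrt (CSinv u v w 1 2 / (2 * CSinv u v w 2 2) + 1/2) =
      Real.sqrt (1/2 + cos (π/v) / (2 * sin (π/u) ^ 2)) ∧
    (∀ d : ℝ, 0 ≤ d →
      Real.cosh d = -CSinv u v w 1 2 / Real.sqrt (CSinv u v w 1 1 * CSinv u v w 2 2) →
      Real.cosh (d/2) = Real.sqrt (CSinv u v w 1 2 / (2 * CSinv u v w 2 2) + 1/2)) := by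
  subst huw
  set c := cos (π/u) with hc
  set dd := cos (π/v) with hdd
  set Bd := (CSmatrix u v u).det with hBd
  -- basic positivity facts
  have hπ := Real.pi_pos
  have hu0 : (0:ℝ) < u := by linarith
  have hv0 : (0:ℝ) < v := by linarith
  have hsin : 0 < sin (π/u) := by
    apply Real.sin_pos_of_pos_of_lt_pi
    · positivity
    · rw [div_lt_iff₀ hu0]; nlinarith
  have hs2 : sin (π/u) ^ 2 = 1 - c^2 := by
    have := Real.sin_sq_add_cos_sq (π/u); rw [hc]; linarith
  have hc2 : 0 < 1 - c^2 := by rw [← hs2]; positivity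
  have hd0 : 0 < dd := by
    apply Real.cos_pos_of_mem_Ioo
    constructor
    · have : (0:ℝ) < π/v := by positivity
      linarith
    · rw [div_lt_iff₀ hv0]; nlinarith
  -- the explicit inverse
  have hdet4 : Bd = (1-c^2)^2 - dd^2 := by
    rw [hBd, CSmatrix, Matrix.det_succ_row_zero]
    simp [Fin.sum_univ_succ, Matrix.det_fin_three, show ((1:Fin 4).succAbove 2) = 3 from by decide]
    ring
  set M : Matrix (Fin 4) (Fin 4) ℝ :=
    !![1-c^2-dd^2, c*(1-c^2), c*dd, c^2*dd;
       c*(1-c^2), 1-c^2, dd, c*dd;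
       c*dd, dd, 1-c^2, c*(1-c^2);
       c^2*dd, c*dd, c*(1-c^2), 1-c^2-dd^2] with hM
  have hAM : CSmatrix u v u * M = Bd • (1 : Matrix (Fin 4) (Fin 4) ℝ) := by
    rw [hdet4]
    ext i j
    fin_cases i <;> fin_cases j <;>
      simp [CSmatrix, hM, Matrix.mul_apply, Fin.sum_univ_four, Matrix.one_apply] <;>
      ring
  have hInv : CSinv u v u = Bd⁻¹ • M := by
    rw [CSinv]
    apply Matrix.inv_eq_right_inv
    rw [Matrix.mul_smul, hAM, smul_smul, inv_mul_cancel₀ hdet, one_smul]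
  -- entries
  have h11 : CSinv u v u 1 1 = Bd⁻¹ * (1-c^2) := by
    rw [hInv]; simp [hM]
  have h22 : CSinv u v u 2 2 = Bd⁻¹ * (1-c^2) := by
    rw [hInv]; simp [hM]
  have h12 : CSinv u v u 1 2 = Bd⁻¹ * dd := by
    rw [hInv]; simp [hM]
  have h21 : CSinv u v u 2 1 = Bd⁻¹ * dd := by
    rw [hInv]; simp [hM]
  set s := Bd⁻¹ * (1-c^2) with hs
  set t := Bd⁻¹ * dd with ht
  have hBinv : Bd⁻¹ < 0 := inv_lt_zero.mpr hBneg
  have hsneg : s < 0 := mul_neg_of_neg_of_pos hBinv hc2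
  have hstneg : s + t < 0 := by
    have : s + t = Bd⁻¹ * (1 - c^2 + dd) := by rw [hs, ht]; ring
    rw [this]
    exact mul_neg_of_neg_of_pos hBinv (by linarith)
  have hsne : s ≠ 0 := ne_of_lt hsneg
  have hstne : s + t ≠ 0 := ne_of_lt hstneg
  -- bilinear form values
  have hb22 : Bf (a 2) (a 2) = s := by rw [hGram 2 2, h22]
  have hb21 : Bf (a 2) (a 1) = t := by rw [hGram 2 1, h21]
  have hb12 : Bf (a 1) (a 2) = t := by rw [hGram 1 2, h12]
  have hb11 : Bf (a 1) (a 1) = s := by rw [hGram 1 1, h11]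
  have hb2f : Bf (a 2) f = t + s := by
    rw [hf, map_add, hb21, hb22]
  have hbff : Bf f f = 2 * (s + t) := by
    simp only [hf, map_add, LinearMap.add_apply, hb11, hb12, hb21, hb22]
    ring
  -- the common square root
  have key : Real.sqrt (t / (2*s) + 1/2) = Real.sqrt ((s+t)^2 / (2*s*(s+t))) := by
    congr 1
    field_simp
    ring
  refine ⟨by rw [h11, h22], by rw [h22]; exact hsneg, by rw [h11, h12]; exact hstneg, ?_, ?_, ?_⟩
  · -- distance formula
    rw [hb2f, hb22, hbff, h12, h22, key,
      show s * (2*(s+t)) = 2*s*(s+t) by ring, show t+s = s+t by ring,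
      Real.sqrt_div (sq_nonneg (s+t)), Real.sqrt_sq_eq_abs, abs_of_neg hstneg]
  · -- trigonometric form
    rw [h12, h22]
    congr 1
    rw [hs2, ht, hs]
    field_simp
    ring
  · -- midpoint
    intro δ hδ hcosh
    rw [h11, h12, h22] at hcosh
    rw [h12, h22]
    have hss : Real.sqrt (s * s) = -s := by
      rw [show s*s = (-s)*(-s) by ring, Real.sqrt_mul_self (by linarith)]
    rw [hss] at hcosh
    have hcd : Real.cosh δ = t / s := by
      rw [hcosh, neg_div_neg_eq]
    have h2 : Real.cosh δ = 2 * Real.cosh (δ/2) ^ 2 - 1 := by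
      rw [show δ = 2 * (δ/2) by ring, Real.cosh_two_mul, Real.sinh_sq]
      ring
    have harg : t / (2*s) + 1/2 = Real.cosh (δ/2) ^ 2 := by
      have : t / (2*s) + 1/2 = (Real.cosh δ + 1) / 2 := by
        rw [hcd]; field_simp
      rw [this, h2]; ring
    rw [harg, Real.sqrt_sq (Real.cosh_pos _).le]
end

section
/- (Point-to-plane distance (4.7), F₀₃ to the face with pole b⁰) Assume u = w and B < 0, and let f₀₃ = a₀ + a₃ and b⁰ = a₀ − cos(π/u)·a₁. Then ⟨f₀₃, b⁰⟩ = 1, ⟨b⁰, b⁰⟩ = 1, ⟨f₀₃, f₀₃⟩ = 2(a₀₀ + a₀₃) < 0, and 1 − 1/(2(a₀₀ + a₀₃)) = 1 + (cos(π/v) − sin²(π/u))/(2·(1 − cos(π/v))). (The left-hand side is cosh² of the hyperbolic distance from the point F₀₃ to the plane with pole b⁰, since sinh² of that distance equals ⟨f₀₃,b⁰⟩²/(−⟨f₀₃,f₀₃⟩·⟨b⁰,b⁰⟩).) -/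
open Real Matrix

/-!
The vector `b⁰ = a₀ - cos (π/u) • a₁ = ∑ⱼ b^{j0} aⱼ` is dual to the `aᵢ`:
`⟨aₖ, b⁰⟩ = (b⁻¹ b)_{k0} = δ_{k0}`, which gives `⟨f₀₃, b⁰⟩ = ⟨b⁰, b⁰⟩ = 1` at once.
For the rest one inverts the tridiagonal Schläfli matrix explicitly. When `u = w`, writing
`c = cos (π/u)` and `d = cos (π/v)`, its determinant factors as `(1 - c² - d) (1 + d - c²)`, so
`a₀₀ + a₀₃ = (1 - d) / (1 - c² - d)`; as `0 ≤ c, d < 1`, the sign condition `B < 0` says exactly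
that `1 - c² - d < 0`.
-/

theorem LinearMap.BilinForm.apply_sum_smul_of_gram_eq_inv {R V n : Type*} [CommRing R]
    [AddCommGroup V] [Module R V] [Fintype n] [DecidableEq n] {M : Matrix n n R}
    (hM : IsUnit M.det) (Bf : LinearMap.BilinForm R V) {a : n → V}
    (hGram : ∀ i j, Bf (a i) (a j) = M⁻¹ i j) (k i : n) :
    Bf (a k) (∑ j, M j i • a j) = (1 : Matrix n n R) k i := by
  simp only [map_sum, map_smul, hGram, smul_eq_mul, ← nonsing_inv_mul M hM, mul_apply, mul_comm]

section SchlafliMatrix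

variable {K : Type*} [Field K] (x y z : K)

def schlafliMatrix : Matrix (Fin 4) (Fin 4) K :=
  !![1, -x, 0, 0;
     -x, 1, -y, 0;
     0, -y, 1, -z;
     0, 0, -z, 1]

theorem det_schlafliMatrix :
    (schlafliMatrix x y z).det = 1 - x ^ 2 - y ^ 2 - z ^ 2 + x ^ 2 * z ^ 2 := by
  simp [schlafliMatrix, det_succ_row_zero, Fin.sum_univ_succ, Fin.succAbove]
  ring

theorem inv_schlafliMatrix :
    (schlafliMatrix x y z)⁻¹ = (1 - x ^ 2 - y ^ 2 - z ^ 2 + x ^ 2 * z ^ 2)⁻¹ •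
      !![1 - y ^ 2 - z ^ 2, x * (1 - z ^ 2), x * y, x * y * z;
         x * (1 - z ^ 2), 1 - z ^ 2, y, y * z;
         x * y, y, 1 - x ^ 2, z * (1 - x ^ 2);
         x * y * z, y * z, z * (1 - x ^ 2), 1 - x ^ 2 - y ^ 2] := by
  by_cases hD : 1 - x ^ 2 - y ^ 2 - z ^ 2 + x ^ 2 * z ^ 2 = 0
  · rw [nonsing_inv_apply_not_isUnit _ (by simp [det_schlafliMatrix, hD]), hD, _root_.inv_zero,
      zero_smul]
  · refine inv_eq_right_inv ?_
    rw [mul_smul_comm]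
    convert inv_smul_smul₀ hD (1 : Matrix (Fin 4) (Fin 4) K) using 2
    ext i j
    fin_cases i <;> fin_cases j <;>
      simp [schlafliMatrix, mul_apply, Fin.sum_univ_four, one_apply] <;> ring

theorem inv_schlafliMatrix_zero_zero_add_zero_three (h : 1 + y - x ^ 2 ≠ 0) :
    (schlafliMatrix x y x)⁻¹ 0 0 + (schlafliMatrix x y x)⁻¹ 0 3 =
      (1 - y) / (1 - x ^ 2 - y) := by
  have hfactor : 1 - x ^ 2 - y ^ 2 - x ^ 2 + x ^ 2 * x ^ 2 = (1 - x ^ 2 - y) * (1 + y - x ^ 2) := by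
    ring
  by_cases hden : 1 - x ^ 2 - y = 0
  · simp [inv_schlafliMatrix, hfactor, hden]
  · simp only [inv_schlafliMatrix, hfactor, _root_.mul_inv_rev, Matrix.smul_apply, of_apply,
      cons_val', cons_val_zero, cons_val_fin_one, cons_val, smul_eq_mul]
    field_simp
    ring

end SchlafliMatrix

theorem cos_pi_div_mem_Ico {u : ℝ} (hu : 2 ≤ u) : cos (π / u) ∈ Set.Ico 0 1 := by
  have hπu : 0 < π / u := div_pos pi_pos (by linarith)
  refine ⟨cos_nonneg_of_neg_pi_div_two_le_of_le (by linarith [pi_pos]) ?_, ?_⟩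
  · exact div_le_div_of_nonneg_left pi_pos.le two_pos hu
  · simpa using cos_lt_cos_of_nonneg_of_le_pi le_rfl (div_le_self pi_pos.le (by linarith)) hπu

theorem stmt16_general (u v w : ℝ) (hu : 3 ≤ u) (hv : 3 ≤ v)
    {V : Type*} [AddCommGroup V] [Module ℝ V]
    (Bf : LinearMap.BilinForm ℝ V)
    (a : Fin 4 → V)
    (hGram : ∀ i j : Fin 4, Bf (a i) (a j) = CSinv u v w i j)
    (huw : u = w) (hBneg : (CSmatrix u v w).det < 0)
    (f b0 : V) (hf : f = a 0 + a 3) (hb0 : b0 = a 0 - cos (π/u) • a 1) :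
    Bf f b0 = 1 ∧ Bf b0 b0 = 1 ∧
    Bf f f = 2 * (CSinv u v w 0 0 + CSinv u v w 0 3) ∧
    2 * (CSinv u v w 0 0 + CSinv u v w 0 3) < 0 ∧
    1 - 1 / (2 * (CSinv u v w 0 0 + CSinv u v w 0 3)) =
      1 + (cos (π/v) - sin (π/u) ^ 2) / (2 * (1 - cos (π/v))) := by
  subst huw hf
  set x := cos (π / u)
  set y := cos (π / v)
  have hb : CSmatrix u v u = schlafliMatrix x y x := rfl
  have hdual : ∀ k, Bf (a k) b0 = (1 : Matrix (Fin 4) (Fin 4) ℝ) k 0 := fun k => by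
    simpa [hb0, hb, schlafliMatrix, Fin.sum_univ_four, sub_eq_add_neg] using
      Bf.apply_sum_smul_of_gram_eq_inv (isUnit_iff_ne_zero.2 hBneg.ne) hGram k 0
  obtain ⟨hx0, hx1⟩ := cos_pi_div_mem_Ico (u := u) (by linarith)
  obtain ⟨hy0, hy1⟩ := cos_pi_div_mem_Ico (u := v) (by linarith)
  have hpos : 0 < 1 + y - x ^ 2 := by nlinarith
  have hneg : 1 - x ^ 2 - y < 0 := by
    rw [hb, det_schlafliMatrix] at hBneg
    nlinarith
  have hsum : CSinv u v u 0 0 + CSinv u v u 0 3 = (1 - y) / (1 - x ^ 2 - y) :=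
    inv_schlafliMatrix_zero_zero_add_zero_three x y hpos.ne'
  refine ⟨?_, ?_, ?_, ?_, ?_⟩
  · simp [hdual]
  · nth_rewrite 1 [hb0]
    simp [hdual]
  · simp only [map_add, LinearMap.add_apply, hGram, CSinv, hb, inv_schlafliMatrix,
      Matrix.smul_apply, of_apply, cons_val', cons_val_zero, cons_val_fin_one, cons_val,
      cons_val_one, smul_eq_mul]
    ring
  · rw [hsum]
    exact mul_neg_of_pos_of_neg two_pos (div_neg_of_pos_of_neg (by linarith) hneg)
  · rw [hsum, sin_sq]
    field_simp
    ring

theorem stmt16 (u v w : ℝ) (hu : 3 ≤ u) (hv : 3 ≤ v) (hw : 3 ≤ w)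
    (hdet : (CSmatrix u v w).det ≠ 0)
    {V : Type*} [AddCommGroup V] [Module ℝ V]
    (Bf : LinearMap.BilinForm ℝ V)
    (hsymm : ∀ x y : V, Bf x y = Bf y x)
    (a : Fin 4 → V)
    (hGram : ∀ i j : Fin 4, Bf (a i) (a j) = CSinv u v w i j)
    (huw : u = w) (hBneg : (CSmatrix u v w).det < 0)
    (f b0 : V) (hf : f = a 0 + a 3) (hb0 : b0 = a 0 - cos (π/u) • a 1) :
    Bf f b0 = 1 ∧ Bf b0 b0 = 1 ∧
    Bf f f = 2 * (CSinv u v w 0 0 + CSinv u v w 0 3) ∧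
    2 * (CSinv u v w 0 0 + CSinv u v w 0 3) < 0 ∧
    1 - 1 / (2 * (CSinv u v w 0 0 + CSinv u v w 0 3)) =
      1 + (cos (π/v) - sin (π/u) ^ 2) / (2 * (1 - cos (π/v))) :=
  stmt16_general u v w hu hv Bf a hGram huw hBneg f b0 hf hb0
end
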